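/- arXiv:1012.2673 — 4 statements merged into one kernel-verified Lean document; each statement's English description precedes it below -/
import Mathlib

section
/- Let k, M, L, i be natural numbers with L ≥ 1 and 2 ≤ i ≤ k − M − 1 − L. Then C(k − M − 1 − L, i) · C(k − M, i) < C(k − M − L, i) · C(k − M − 1, i), where C(n, m) denotes the binomial coefficient. -/
lemma key_choose_lt (s t i : ℕ) (h1 : 1 ≤ i) (his : i ≤ s) (hst : s < t) :
    Nat.choose s i * Nat.choose (t+1) i < Nat.choose (s+1) i * Nat.choose t i := by
  have hpos : 0 < Nat.choose (s+1) i * Nat.choose (t+1) i :=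
    Nat.mul_pos (Nat.choose_pos (by omega)) (Nat.choose_pos (by omega))
  have hs := Nat.choose_mul_succ_eq s i
  have ht := Nat.choose_mul_succ_eq t i
  have hlt : (s+1-i)*(t+1) < (s+1)*(t+1-i) := by
    have ha : i ≤ s+1 := by omega
    have hb : i ≤ t+1 := by omega
    zify [ha, hb]
    nlinarith [hst, h1]
  have e1 : (Nat.choose s i * Nat.choose (t+1) i) * ((s+1)*(t+1))
      = (Nat.choose (s+1) i * Nat.choose (t+1) i) * ((s+1-i)*(t+1)) := by
    rw [show (Nat.choose s i * Nat.choose (t+1) i) * ((s+1)*(t+1))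
        = (Nat.choose s i * (s+1)) * (Nat.choose (t+1) i * (t+1)) from by ring, hs]
    ring
  have e2 : (Nat.choose (s+1) i * Nat.choose t i) * ((s+1)*(t+1))
      = (Nat.choose (s+1) i * Nat.choose (t+1) i) * ((s+1)*(t+1-i)) := by
    rw [show (Nat.choose (s+1) i * Nat.choose t i) * ((s+1)*(t+1))
        = (Nat.choose (s+1) i * (s+1)) * (Nat.choose t i * (t+1)) from by ring, ht]
    ring
  have hmain : (Nat.choose s i * Nat.choose (t+1) i) * ((s+1)*(t+1))
      < (Nat.choose (s+1) i * Nat.choose t i) * ((s+1)*(t+1)) := by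
    rw [e1, e2]
    exact Nat.mul_lt_mul_of_pos_left hlt hpos
  exact Nat.lt_of_mul_lt_mul_right hmain

/-- **Cross-multiplied key inequality of Lemma 2 (strict form).**
For naturals `k, M, L, i` with `L ≥ 1` and `2 ≤ i ≤ k − M − 1 − L` we have
`C(k − M − 1 − L, i) · C(k − M, i) < C(k − M − L, i) · C(k − M − 1, i)`,
i.e. the ratio `C(k − M − L, i)/C(k − M, i)` strictly decreases when `M` grows by one. -/
theorem stmt_6 (k M L i : ℕ) (hL : 1 ≤ L) (hi2 : 2 ≤ i) (hi : i ≤ k - M - 1 - L) :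
    Nat.choose (k - M - 1 - L) i * Nat.choose (k - M) i
      < Nat.choose (k - M - L) i * Nat.choose (k - M - 1) i := by
  obtain ⟨s, hs⟩ : ∃ s, k - M - L = s + 1 := ⟨k - M - L - 1, by omega⟩
  obtain ⟨t, ht⟩ : ∃ t, k - M = t + 1 := ⟨k - M - 1, by omega⟩
  have h1 : k - M - 1 - L = s := by omega
  have h2 : k - M - 1 = t := by omega
  rw [h1, h2, hs, ht]
  exact key_choose_lt s t i (by omega) (by omega) (by omega)
end

section
/- Let k, L be natural numbers with 1 ≤ L ≤ k and let π : {0, 1, ..., k} → ℝ satisfy π(i) ≥ 0 for all i. For 0 ≤ M ≤ k − L define f(M) = Σ_{i=0}^{k−M−L} π(i) · C(k − M − L, i) / C(k − M, i), where C(n, m) denotes the binomial coefficient. Then for every M with 0 ≤ M < k − L one has f(M + 1) ≤ f(M). -/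
/-- The probability `π'(0)` that a received symbol is redundant, when `M` decoded
input symbols have been acknowledged and excluded from encoding:
`f(M) = ∑_{i=0}^{k−M−L} π(i) · C(k − M − L, i) / C(k − M, i)`. -/
noncomputable def redundancyProb (k L : ℕ) (π : ℕ → ℝ) (M : ℕ) : ℝ :=
  ∑ i ∈ Finset.range (k - M - L + 1),
    π i * ((Nat.choose (k - M - L) i : ℕ) : ℝ) / ((Nat.choose (k - M) i : ℕ) : ℝ)

lemma df_ineq (n L i : ℕ) (hL : 1 ≤ L) (hLn : L + 1 ≤ n) :
    Nat.descFactorial (n - 1 - L) i * Nat.descFactorial n i ≤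
    Nat.descFactorial (n - L) i * Nat.descFactorial (n - 1) i := by
  induction i with
  | zero => simp
  | succ i ih =>
    by_cases hi : n - 1 - L ≤ i
    · have : Nat.descFactorial (n - 1 - L) (i + 1) = 0 :=
        Nat.descFactorial_eq_zero_iff_lt.mpr (by omega)
      rw [this, Nat.zero_mul]
      exact Nat.zero_le _
    · push_neg at hi
      rw [Nat.descFactorial_succ, Nat.descFactorial_succ, Nat.descFactorial_succ,
        Nat.descFactorial_succ]
      have hfac : (n - 1 - L - i) * (n - i) ≤ (n - L - i) * (n - 1 - i) := by
        set a := n - 1 - L - i with ha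
        have h1 : n - L - i = a + 1 := by omega
        have h2 : n - i = (n - 1 - i) + 1 := by omega
        have h3 : a ≤ n - 1 - i := by omega
        rw [h1, h2, Nat.mul_succ, Nat.succ_mul]
        set b := n - 1 - i
        have : a * b ≤ a * b := le_refl _
        omega
      calc (n - 1 - L - i) * Nat.descFactorial (n - 1 - L) i *
            ((n - i) * Nat.descFactorial n i)
          = ((n - 1 - L - i) * (n - i)) *
            (Nat.descFactorial (n - 1 - L) i * Nat.descFactorial n i) := by ring
        _ ≤ ((n - L - i) * (n - 1 - i)) *
            (Nat.descFactorial (n - L) i * Nat.descFactorial (n - 1) i) :=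
            Nat.mul_le_mul hfac ih
        _ = (n - L - i) * Nat.descFactorial (n - L) i *
            ((n - 1 - i) * Nat.descFactorial (n - 1) i) := by ring

lemma choose_ineq (n L i : ℕ) (hL : 1 ≤ L) (hLn : L + 1 ≤ n) :
    Nat.choose (n - 1 - L) i * Nat.choose n i ≤
    Nat.choose (n - L) i * Nat.choose (n - 1) i := by
  have h := df_ineq n L i hL hLn
  rw [Nat.descFactorial_eq_factorial_mul_choose, Nat.descFactorial_eq_factorial_mul_choose,
    Nat.descFactorial_eq_factorial_mul_choose, Nat.descFactorial_eq_factorial_mul_choose] at h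
  have hpos : 0 < i.factorial * i.factorial := Nat.mul_pos i.factorial_pos i.factorial_pos
  have h' : i.factorial * i.factorial * (Nat.choose (n - 1 - L) i * Nat.choose n i) ≤
      i.factorial * i.factorial * (Nat.choose (n - L) i * Nat.choose (n - 1) i) := by
    calc i.factorial * i.factorial * (Nat.choose (n - 1 - L) i * Nat.choose n i)
        = i.factorial * Nat.choose (n - 1 - L) i * (i.factorial * Nat.choose n i) := by ring
      _ ≤ i.factorial * Nat.choose (n - L) i * (i.factorial * Nat.choose (n - 1) i) := h
      _ = i.factorial * i.factorial * (Nat.choose (n - L) i * Nat.choose (n - 1) i) := by ring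
  exact Nat.le_of_mul_le_mul_left h' hpos

/-- **Lemma 2 (Acknowledgments Reduce Redundancy), non-strict form.**
For `1 ≤ L ≤ k` and `π : {0,...,k} → ℝ` with `π(i) ≥ 0`, the redundancy
probability `f(M)` satisfies `f(M + 1) ≤ f(M)` for every `0 ≤ M < k − L`. -/
theorem stmt_8 (k L : ℕ) (hL1 : 1 ≤ L) (hLk : L ≤ k) (π : ℕ → ℝ)
    (hnn : ∀ i ≤ k, 0 ≤ π i) (M : ℕ) (hM : M < k - L) :
    redundancyProb k L π (M + 1) ≤ redundancyProb k L π M := by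
  set n := k - M with hn
  have hLn : L + 1 ≤ n := by omega
  set m := k - M - L with hm
  have hm1 : 1 ≤ m := by omega
  have e1 : k - (M + 1) - L = m - 1 := by omega
  have e2 : k - (M + 1) = n - 1 := by omega
  have e3 : m - 1 + 1 = m := by omega
  have e4 : m - 1 = n - 1 - L := by omega
  have e5 : m = n - L := by omega
  unfold redundancyProb
  rw [e1, e2, e3, ← hn, ← hm]
  have step1 : ∑ i ∈ Finset.range m,
      π i * ((Nat.choose (m - 1) i : ℕ) : ℝ) / ((Nat.choose (n - 1) i : ℕ) : ℝ) ≤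
      ∑ i ∈ Finset.range m,
      π i * ((Nat.choose m i : ℕ) : ℝ) / ((Nat.choose n i : ℕ) : ℝ) := by
    apply Finset.sum_le_sum
    intro i hi
    rw [Finset.mem_range] at hi
    have hik : i ≤ k := by omega
    have hd1 : (0 : ℝ) < ((Nat.choose (n - 1) i : ℕ) : ℝ) := by
      exact_mod_cast Nat.choose_pos (by omega)
    have hd2 : (0 : ℝ) < ((Nat.choose n i : ℕ) : ℝ) := by
      exact_mod_cast Nat.choose_pos (by omega)
    rw [div_le_div_iff₀ hd1 hd2]
    have hc : Nat.choose (m - 1) i * Nat.choose n i ≤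
        Nat.choose m i * Nat.choose (n - 1) i := by
      rw [e4, e5]; exact choose_ineq n L i hL1 hLn
    have hcr : ((Nat.choose (m - 1) i : ℕ) : ℝ) * ((Nat.choose n i : ℕ) : ℝ) ≤
        ((Nat.choose m i : ℕ) : ℝ) * ((Nat.choose (n - 1) i : ℕ) : ℝ) := by
      exact_mod_cast hc
    have hπ := hnn i hik
    calc π i * ((Nat.choose (m - 1) i : ℕ) : ℝ) * ((Nat.choose n i : ℕ) : ℝ)
        = π i * (((Nat.choose (m - 1) i : ℕ) : ℝ) * ((Nat.choose n i : ℕ) : ℝ)) := by ring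
      _ ≤ π i * (((Nat.choose m i : ℕ) : ℝ) * ((Nat.choose (n - 1) i : ℕ) : ℝ)) :=
          mul_le_mul_of_nonneg_left hcr hπ
      _ = π i * ((Nat.choose m i : ℕ) : ℝ) * ((Nat.choose (n - 1) i : ℕ) : ℝ) := by ring
  have step2 : ∑ i ∈ Finset.range m,
      π i * ((Nat.choose m i : ℕ) : ℝ) / ((Nat.choose n i : ℕ) : ℝ) ≤
      ∑ i ∈ Finset.range (m + 1),
      π i * ((Nat.choose m i : ℕ) : ℝ) / ((Nat.choose n i : ℕ) : ℝ) := by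
    apply Finset.sum_le_sum_of_subset_of_nonneg
    · exact Finset.range_subset_range.mpr (by omega)
    · intro i hi _
      rw [Finset.mem_range] at hi
      have hik : i ≤ k := by omega
      apply div_nonneg
      · exact mul_nonneg (hnn i hik) (by positivity)
      · positivity
  exact le_trans step1 step2
end

section
/- Let k, L be natural numbers with 1 ≤ L ≤ k and let π : {0, 1, ..., k} → ℝ satisfy π(i) ≥ 0 for all i. For 0 ≤ M ≤ k − L define f(M) = Σ_{i=0}^{k−M−L} π(i) · C(k − M − L, i) / C(k − M, i), where C(n, m) denotes the binomial coefficient. If 0 ≤ M < k − L and there exists i with 2 ≤ i ≤ k − M − 1 − L and π(i) > 0, then f(M + 1) < f(M). -/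
open Finset

/-- Ratio of binomial coefficients as a product. -/
lemma choose_ratio_prod (a n i : ℕ) (hia : i ≤ a) (han : a ≤ n) :
    ((Nat.choose a i : ℕ) : ℝ) / ((Nat.choose n i : ℕ) : ℝ)
      = ∏ j ∈ Finset.range i, (((a - j : ℕ) : ℝ) / ((n - j : ℕ) : ℝ)) := by
  have hda : (a.descFactorial i : ℝ) = (Nat.factorial i : ℝ) * (Nat.choose a i : ℝ) := by
    exact_mod_cast congrArg (Nat.cast : ℕ → ℝ) (Nat.descFactorial_eq_factorial_mul_choose a i)
  have hdn : (n.descFactorial i : ℝ) = (Nat.factorial i : ℝ) * (Nat.choose n i : ℝ) := by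
    exact_mod_cast congrArg (Nat.cast : ℕ → ℝ) (Nat.descFactorial_eq_factorial_mul_choose n i)
  have hfac : (Nat.factorial i : ℝ) ≠ 0 := by positivity
  have h1 : ((Nat.choose a i : ℕ) : ℝ) / ((Nat.choose n i : ℕ) : ℝ)
      = (a.descFactorial i : ℝ) / (n.descFactorial i : ℝ) := by
    rw [hda, hdn, mul_div_mul_left _ _ hfac]
  rw [h1]
  have hpa : (a.descFactorial i : ℝ) = ∏ j ∈ Finset.range i, ((a - j : ℕ) : ℝ) := by
    rw [Nat.descFactorial_eq_prod_range]; push_cast; rfl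
  have hpn : (n.descFactorial i : ℝ) = ∏ j ∈ Finset.range i, ((n - j : ℕ) : ℝ) := by
    rw [Nat.descFactorial_eq_prod_range]; push_cast; rfl
  rw [hpa, hpn, ← Finset.prod_div_distrib]

lemma ratio_le (n L i : ℕ) (hL : 1 ≤ L) (hn : L + 1 ≤ n) (hi : i ≤ n - 1 - L) :
    ((Nat.choose (n - 1 - L) i : ℕ) : ℝ) / ((Nat.choose (n - 1) i : ℕ) : ℝ)
      ≤ ((Nat.choose (n - L) i : ℕ) : ℝ) / ((Nat.choose n i : ℕ) : ℝ) := by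
  rw [choose_ratio_prod (n - 1 - L) (n - 1) i hi (by omega),
    choose_ratio_prod (n - L) n i (by omega) (by omega)]
  apply Finset.prod_le_prod
  · intro j hj
    simp only [Finset.mem_range] at hj
    have h1 : (1 : ℝ) ≤ ((n - 1 - L - j : ℕ) : ℝ) := by exact_mod_cast (by omega : 1 ≤ n - 1 - L - j)
    have h2 : (0 : ℝ) < ((n - 1 - j : ℕ) : ℝ) := by exact_mod_cast (by omega : 0 < n - 1 - j)
    positivity
  · intro j hj
    simp only [Finset.mem_range] at hj
    set x := n - 1 - L - j with hx
    set y := n - 1 - j with hy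
    have e1 : n - L - j = x + 1 := by omega
    have e2 : n - j = y + 1 := by omega
    have hxy : x ≤ y := by omega
    rw [e1, e2]
    have hy0 : (0 : ℝ) < (y : ℝ) := by exact_mod_cast (by omega : 0 < y)
    have hy1 : (0 : ℝ) < ((y + 1 : ℕ) : ℝ) := by exact_mod_cast Nat.succ_pos y
    rw [div_le_div_iff₀ hy0 hy1]
    have : (x : ℕ) * (y + 1) ≤ (x + 1) * y := by nlinarith
    exact_mod_cast this

lemma ratio_lt (n L i : ℕ) (hL : 1 ≤ L) (hn : L + 1 ≤ n) (hi : i ≤ n - 1 - L) (hi1 : 1 ≤ i) :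
    ((Nat.choose (n - 1 - L) i : ℕ) : ℝ) / ((Nat.choose (n - 1) i : ℕ) : ℝ)
      < ((Nat.choose (n - L) i : ℕ) : ℝ) / ((Nat.choose n i : ℕ) : ℝ) := by
  rw [choose_ratio_prod (n - 1 - L) (n - 1) i hi (by omega),
    choose_ratio_prod (n - L) n i (by omega) (by omega)]
  apply Finset.prod_lt_prod
  · intro j hj
    simp only [Finset.mem_range] at hj
    have h1 : (0 : ℝ) < ((n - 1 - L - j : ℕ) : ℝ) := by exact_mod_cast (by omega : 0 < n - 1 - L - j)
    have h2 : (0 : ℝ) < ((n - 1 - j : ℕ) : ℝ) := by exact_mod_cast (by omega : 0 < n - 1 - j)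
    positivity
  · intro j hj
    simp only [Finset.mem_range] at hj
    set x := n - 1 - L - j with hx
    set y := n - 1 - j with hy
    have e1 : n - L - j = x + 1 := by omega
    have e2 : n - j = y + 1 := by omega
    have hxy : x ≤ y := by omega
    rw [e1, e2]
    have hy0 : (0 : ℝ) < (y : ℝ) := by exact_mod_cast (by omega : 0 < y)
    have hy1 : (0 : ℝ) < ((y + 1 : ℕ) : ℝ) := by exact_mod_cast Nat.succ_pos y
    rw [div_le_div_iff₀ hy0 hy1]
    have : (x : ℕ) * (y + 1) ≤ (x + 1) * y := by nlinarith
    exact_mod_cast this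
  · refine ⟨0, Finset.mem_range.mpr (by omega), ?_⟩
    set x := n - 1 - L - 0 with hx
    set y := n - 1 - 0 with hy
    have e1 : n - L - 0 = x + 1 := by omega
    have e2 : n - 0 = y + 1 := by omega
    have hxy : x < y := by omega
    rw [e1, e2]
    have hy0 : (0 : ℝ) < (y : ℝ) := by exact_mod_cast (by omega : 0 < y)
    have hy1 : (0 : ℝ) < ((y + 1 : ℕ) : ℝ) := by exact_mod_cast Nat.succ_pos y
    rw [div_lt_div_iff₀ hy0 hy1]
    have : (x : ℕ) * (y + 1) < (x + 1) * y := by nlinarith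
    exact_mod_cast this



/-- **Lemma 2 (Acknowledgments Reduce Redundancy), strict form.**
For `1 ≤ L ≤ k`, `π : {0,...,k} → ℝ` with `π(i) ≥ 0`, and `0 ≤ M < k − L`: if some
degree `i` with `2 ≤ i ≤ k − M − 1 − L` has `π(i) > 0`, then `f(M + 1) < f(M)`,
i.e. the probability of receiving a redundant symbol strictly decreases with the
number `M` of acknowledged symbols. -/
theorem stmt_9 (k L : ℕ) (hL1 : 1 ≤ L) (hLk : L ≤ k) (π : ℕ → ℝ)
    (hnn : ∀ i ≤ k, 0 ≤ π i) (M : ℕ) (hM : M < k - L)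
    (hex : ∃ i, 2 ≤ i ∧ i ≤ k - M - 1 - L ∧ 0 < π i) :
    redundancyProb k L π (M + 1) < redundancyProb k L π M := by
  set n := k - M with hn
  have hn1 : L + 1 ≤ n := by omega
  have e1 : k - (M + 1) = n - 1 := by omega
  have e2 : k - (M + 1) - L = n - 1 - L := by omega
  have e3 : n - 1 - L + 1 = n - L := by omega
  have e4 : k - M - L = n - L := by omega
  unfold redundancyProb
  rw [e1, e4, ← hn, e3]
  have e5 : n - L + 1 = (n - L) + 1 := rfl
  rw [e5, Finset.sum_range_succ]
  have hlast : 0 ≤ π (n - L) * ((Nat.choose (n - L) (n - L) : ℕ) : ℝ)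
      / ((Nat.choose n (n - L) : ℕ) : ℝ) := by
    have := hnn (n - L) (by omega)
    positivity
  have hmain : (∑ i ∈ Finset.range (n - L),
        π i * ((Nat.choose (n - 1 - L) i : ℕ) : ℝ) / ((Nat.choose (n - 1) i : ℕ) : ℝ))
      < ∑ i ∈ Finset.range (n - L),
        π i * ((Nat.choose (n - L) i : ℕ) : ℝ) / ((Nat.choose n i : ℕ) : ℝ) := by
    obtain ⟨i₀, hi₀2, hi₀le, hi₀pos⟩ := hex
    have hi₀le' : i₀ ≤ n - 1 - L := by omega
    apply Finset.sum_lt_sum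
    · intro i hi
      simp only [Finset.mem_range] at hi
      have hile : i ≤ n - 1 - L := by omega
      have hr := ratio_le n L i hL1 hn1 hile
      have hπ : 0 ≤ π i := hnn i (by omega)
      rw [mul_div_assoc, mul_div_assoc]
      exact mul_le_mul_of_nonneg_left hr hπ
    · refine ⟨i₀, Finset.mem_range.mpr (by omega), ?_⟩
      have hr := ratio_lt n L i₀ hL1 hn1 hi₀le' (by omega)
      rw [mul_div_assoc, mul_div_assoc]
      exact mul_lt_mul_of_pos_left hr hi₀pos
  linarith
end

section
/- Let k, L be natural numbers with 1 ≤ L ≤ k and let π : {0, 1, ..., k} → ℝ satisfy π(i) ≥ 0 for all i and Σ_{i=0}^{k} π(i) = 1. Define π'(0) = Σ_{i=0}^{k−L} π(i) · C(k − L, i) / C(k, i) and, for 1 ≤ i ≤ L, ρ(i) = Σ_{j = i}^{i + k − L} π(j) · C(L, i) · C(k − L, j − i) / ((1 − π'(0)) · C(k, j)), where C(n, m) denotes the binomial coefficient (with C(n, m) = 0 when m > n). If π'(0) < 1, then ρ(i) ≥ 0 for all 1 ≤ i ≤ L and Σ_{i=1}^{L} ρ(i) = 1. -/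
/-!
A symbol of degree `j` has exactly `i` of its neighbours among the `L` undecoded input symbols with
hypergeometric probability `C(L, i) C(k - L, j - i) / C(k, j)`; by Vandermonde's identity these
weights sum to `1` over `i`, so the reduced distribution `π'` has the same total mass as `π`.
Hence `ρ`, which is `π'` restricted to `1, …, L` and divided by `1 - π'(0)`, sums to `1`.
-/

open Finset

theorem sum_choose_mul_choose_filter_add_eq_add_choose (m n j : ℕ) :
    ∑ p ∈ (range (m + 1) ×ˢ range (n + 1)).filter (fun p => p.1 + p.2 = j),
      m.choose p.1 * n.choose p.2 = (m + n).choose j := by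
  rw [Nat.add_choose_eq]
  refine sum_subset (fun p hp => by simpa using (mem_filter.1 hp).2) fun p hp hnp => ?_
  rw [HasAntidiagonal.mem_antidiagonal] at hp
  simp only [mem_filter, mem_product, mem_range, hp, and_true, not_and, not_lt] at hnp
  rcases le_or_gt p.1 m with hm | hm
  · simp [Nat.choose_eq_zero_of_lt (hnp (by omega))]
  · simp [Nat.choose_eq_zero_of_lt hm]

theorem sum_range_sum_range_choose_mul_choose {R : Type*} [CommSemiring R] (m n : ℕ)
    (g : ℕ → R) :
    ∑ i ∈ range (m + 1), ∑ d ∈ range (n + 1), (m.choose i * n.choose d : R) * g (i + d) =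
      ∑ j ∈ range (m + n + 1), ((m + n).choose j : R) * g j := by
  have hmaps : ∀ p ∈ range (m + 1) ×ˢ range (n + 1), p.1 + p.2 ∈ range (m + n + 1) := by
    intro p hp
    simp only [mem_product, mem_range] at hp ⊢
    omega
  rw [← sum_product' (f := fun i d => (m.choose i * n.choose d : R) * g (i + d)),
    ← sum_fiberwise_of_maps_to hmaps]
  refine sum_congr rfl fun j _ => ?_
  rw [← sum_choose_mul_choose_filter_add_eq_add_choose, Nat.cast_sum, sum_mul]
  refine sum_congr rfl fun p hp => ?_
  rw [(mem_filter.1 hp).2, Nat.cast_mul]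

/-- The reduced degree distribution `π'` of the paper's Lemma 1. -/
noncomputable def reducedDegreeDist (k L : ℕ) (π : ℕ → ℝ) (i : ℕ) : ℝ :=
  ∑ d ∈ range (k - L + 1), (L.choose i * (k - L).choose d : ℝ) * (π (i + d) / k.choose (i + d))

theorem reducedDegreeDist_zero (k L : ℕ) (π : ℕ → ℝ) :
    reducedDegreeDist k L π 0 =
      ∑ i ∈ range (k - L + 1), π i * ((k - L).choose i : ℝ) / (k.choose i : ℝ) := by
  refine sum_congr rfl fun i _ => ?_
  simp only [Nat.choose_zero_right, Nat.cast_one, zero_add]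
  ring

theorem reducedDegreeDist_nonneg {k L : ℕ} {π : ℕ → ℝ} (hLk : L ≤ k) (hπ : ∀ j ≤ k, 0 ≤ π j)
    {i : ℕ} (hi : i ≤ L) : 0 ≤ reducedDegreeDist k L π i :=
  sum_nonneg fun d hd =>
    mul_nonneg (by positivity) (div_nonneg (hπ _ (by simp only [mem_range] at hd; omega))
      (Nat.cast_nonneg _))

theorem sum_reducedDegreeDist {k L : ℕ} (π : ℕ → ℝ) (hLk : L ≤ k) :
    ∑ i ∈ range (L + 1), reducedDegreeDist k L π i = ∑ j ∈ range (k + 1), π j := by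
  unfold reducedDegreeDist
  rw [sum_range_sum_range_choose_mul_choose L (k - L) fun j => π j / k.choose j,
    Nat.add_sub_cancel' hLk]
  refine sum_congr rfl fun j hj => ?_
  have hpos : (k.choose j : ℝ) ≠ 0 :=
    Nat.cast_ne_zero.2 (Nat.choose_pos (Nat.lt_succ_iff.1 (mem_range.1 hj))).ne'
  exact mul_div_cancel₀ _ hpos

theorem sum_Icc_eq_reducedDegreeDist_div {k L : ℕ} (π : ℕ → ℝ) (hLk : L ≤ k) (c : ℝ) (i : ℕ) :
    ∑ j ∈ Icc i (i + k - L),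
        π j * ((L.choose i * (k - L).choose (j - i) : ℕ) : ℝ) / (c * (k.choose j : ℝ)) =
      reducedDegreeDist k L π i / c := by
  rw [Nat.add_sub_assoc hLk, ← Ico_add_one_right_eq_Icc, sum_Ico_eq_sum_range,
    show i + (k - L) + 1 - i = k - L + 1 by omega, reducedDegreeDist, sum_div]
  refine sum_congr rfl fun d _ => ?_
  rw [Nat.add_sub_cancel_left]
  push_cast
  ring

theorem stmt_11_general (k L : ℕ) (hLk : L ≤ k) (π : ℕ → ℝ)
    (hnn : ∀ i ≤ k, 0 ≤ π i)
    (hsum : ∑ i ∈ Finset.range (k + 1), π i = 1)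
    (π'0 : ℝ)
    (hπ'0 : π'0 = ∑ i ∈ Finset.range (k - L + 1),
        π i * ((Nat.choose (k - L) i : ℕ) : ℝ) / ((Nat.choose k i : ℕ) : ℝ))
    (hlt : π'0 < 1)
    (ρ : ℕ → ℝ)
    (hρ : ∀ i, ρ i = ∑ j ∈ Finset.Icc i (i + k - L),
        π j * ((Nat.choose L i * Nat.choose (k - L) (j - i) : ℕ) : ℝ)
          / ((1 - π'0) * ((Nat.choose k j : ℕ) : ℝ))) :
    (∀ i, 1 ≤ i → i ≤ L → 0 ≤ ρ i) ∧ ∑ i ∈ Finset.Icc 1 L, ρ i = 1 := by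
  set π' := reducedDegreeDist k L π
  have hρπ' : ∀ i, ρ i = π' i / (1 - π'0) := fun i =>
    (hρ i).trans (sum_Icc_eq_reducedDegreeDist_div π hLk _ i)
  have hπ'0_eq : π' 0 = π'0 := (reducedDegreeDist_zero k L π).trans hπ'0.symm
  have htotal : π' 0 + ∑ i ∈ Icc 1 L, π' i = 1 := by
    rw [← hsum, ← sum_reducedDegreeDist π hLk, range_eq_Ico,
      sum_eq_sum_Ico_succ_bot L.add_one_pos, zero_add, Ico_add_one_right_eq_Icc]
  have hpos : 0 < 1 - π'0 := sub_pos.2 hlt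
  refine ⟨fun i _ hiL => ?_, ?_⟩
  · rw [hρπ']
    exact div_nonneg (reducedDegreeDist_nonneg hLk hnn hiL) hpos.le
  · rw [sum_congr rfl fun i _ => hρπ' i, ← sum_div, div_eq_one_iff_eq hpos.ne']
    linarith

/-- **Corollary (Feedback Based Adaptive Degree Distribution).**
Let `1 ≤ L ≤ k` and let `π : {0,...,k} → ℝ` be a probability mass function
(`π(i) ≥ 0`, `∑_{i=0}^{k} π(i) = 1`).  With
`π'(0) = ∑_{i=0}^{k−L} π(i) · C(k − L, i) / C(k, i)` and, for `1 ≤ i ≤ L`,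
`ρ(i) = ∑_{j=i}^{i+k−L} π(j) · C(L, i) · C(k − L, j − i) / ((1 − π'(0)) · C(k, j))`:
if `π'(0) < 1`, then `ρ(i) ≥ 0` for all `1 ≤ i ≤ L` and `∑_{i=1}^{L} ρ(i) = 1`,
so `ρ` is a probability distribution on the degrees `1, ..., L`. -/
theorem stmt_11 (k L : ℕ) (hL1 : 1 ≤ L) (hLk : L ≤ k) (π : ℕ → ℝ)
    (hnn : ∀ i ≤ k, 0 ≤ π i)
    (hsum : ∑ i ∈ Finset.range (k + 1), π i = 1)
    (π'0 : ℝ)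
    (hπ'0 : π'0 = ∑ i ∈ Finset.range (k - L + 1),
        π i * ((Nat.choose (k - L) i : ℕ) : ℝ) / ((Nat.choose k i : ℕ) : ℝ))
    (hlt : π'0 < 1)
    (ρ : ℕ → ℝ)
    (hρ : ∀ i, ρ i = ∑ j ∈ Finset.Icc i (i + k - L),
        π j * ((Nat.choose L i * Nat.choose (k - L) (j - i) : ℕ) : ℝ)
          / ((1 - π'0) * ((Nat.choose k j : ℕ) : ℝ))) :
    (∀ i, 1 ≤ i → i ≤ L → 0 ≤ ρ i) ∧ ∑ i ∈ Finset.Icc 1 L, ρ i = 1 :=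
  stmt_11_general k L hLk π hnn hsum π'0 hπ'0 hlt ρ hρ
end
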